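/- Let T be a bounded linear operator on H admitting an A-adjoint T♯, and set α = | ‖Re_A(T) + Im_A(T)‖_A − ‖Re_A(T) − Im_A(T)‖_A |. Then (1/4)·‖T♯T + TT♯‖_A + (α/2)·max{‖Re_A(T)‖_A, ‖Im_A(T)‖_A} ≤ (w_A(T))² ≤ (1/2)·‖TT♯ + T♯T‖_A. -/

import Mathlib

/-!
Everything is transported to Hilbert-space geometry by `‖x‖_A = ‖A^{1/2} x‖`. An operator `S`
with an `A`-adjoint `S'` is `A`-bounded: `‖Sx‖_A² ≤ ‖S'Sx‖_A ‖x‖_A`, and for the `A`-selfadjoint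
`B = S'S` iterating this gives `‖Bx‖_A^(2^n) ≤ ‖B^(2^n) x‖_A ≤ ‖A^{1/2}‖ ‖x‖ ‖B‖^(2^n)` when
`‖x‖_A ≤ 1`, hence `‖Bx‖_A ≤ ‖B‖`. So the suprema defining `‖S‖_A` and `w_A(S)` are finite.

With `P = Re_A(T)` and `Q = Im_A(T)` one has `⟨Px,x⟩_A = Re ⟨Tx,x⟩_A`, `⟨Qx,x⟩_A = Im ⟨Tx,x⟩_A` and
`P² + Q² = (TT♯ + T♯T)/2`, so `|⟨Tx,x⟩_A|² ≤ ‖Px‖_A² + ‖Qx‖_A² = ⟨(P² + Q²)x,x⟩_A`: the upper bound.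
For the lower bound, polarization gives `‖S‖_A ≤ w_A(S)` for `A`-selfadjoint `S`, so
`a = ‖P + Q‖_A` and `b = ‖P - Q‖_A` are at most `√2 w_A(T)` because `|Re z ± Im z| ≤ √2 |z|`.
Moreover `T♯T + TT♯ = (P + Q)² + (P - Q)²` has `A`-seminorm at most `a² + b²`,
`max (‖P‖_A, ‖Q‖_A) ≤ (a + b)/2`, and `a² + b² + |a - b| (a + b) = 2 max (a, b)²`.
-/

noncomputable section

open scoped ComplexInnerProductSpace

variable {H : Type*} [NormedAddCommGroup H] [InnerProductSpace ℂ H] [CompleteSpace H]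

/-- The semi-inner product induced by a positive operator `A`:
`⟨x,y⟩_A = ⟨Ax,y⟩` (linear in the first argument, following the paper's convention). -/
def innerA (A : H →L[ℂ] H) (x y : H) : ℂ := ⟪y, A x⟫

/-- The seminorm induced by `A`: `‖x‖_A = ⟨Ax,x⟩^{1/2}`. -/
def normA (A : H →L[ℂ] H) (x : H) : ℝ := Real.sqrt (innerA A x x).re

/-- The `A`-numerical radius `w_A(T) = sup { |⟨Tx,x⟩_A| : ‖x‖_A = 1 }`. -/
def wA (A T : H →L[ℂ] H) : ℝ :=
  sSup {r : ℝ | ∃ x : H, normA A x = 1 ∧ r = ‖innerA A (T x) x‖}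

/-- The `A`-Crawford number `c_A(T) = inf { |⟨Tx,x⟩_A| : ‖x‖_A = 1 }`. -/
def cA (A T : H →L[ℂ] H) : ℝ :=
  sInf {r : ℝ | ∃ x : H, normA A x = 1 ∧ r = ‖innerA A (T x) x‖}

/-- The `A`-operator seminorm `‖T‖_A = sup { ‖Tx‖_A : ‖x‖_A = 1 }`. -/
def opNormA (A T : H →L[ℂ] H) : ℝ :=
  sSup {r : ℝ | ∃ x : H, normA A x = 1 ∧ r = normA A (T x)}

/-- The `A`-Euclidean operator radius of the pair `(B, C)`. -/
def wAe (A B C : H →L[ℂ] H) : ℝ :=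
  sSup {r : ℝ | ∃ x : H, normA A x = 1 ∧
    r = Real.sqrt ((‖innerA A (B x) x‖)^2 + (‖innerA A (C x) x‖)^2)}

/-- The `A`-Euclidean operator seminorm of the pair `(B, C)`. -/
def normAe (A B C : H →L[ℂ] H) : ℝ :=
  sSup {r : ℝ | ∃ x : H, normA A x = 1 ∧
    r = Real.sqrt ((normA A (B x))^2 + (normA A (C x))^2)}

/-- `Re_A(T) = (T + T♯)/2`, where `Ts` is an `A`-adjoint of `T`. -/
def ReA (T Ts : H →L[ℂ] H) : H →L[ℂ] H := (2 : ℂ)⁻¹ • (T + Ts)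

/-- `Im_A(T) = (T - T♯)/(2i)`, where `Ts` is an `A`-adjoint of `T`. -/
def ImA (T Ts : H →L[ℂ] H) : H →L[ℂ] H := (2 * Complex.I)⁻¹ • (T - Ts)

set_option linter.unusedSectionVars false

open ContinuousLinearMap ComplexConjugate

lemma le_of_forall_pow_two_pow_le_mul {a b C : ℝ} (hb : 0 ≤ b)
    (h : ∀ n : ℕ, a ^ 2 ^ n ≤ C * b ^ 2 ^ n) : a ≤ b := by
  by_contra! hba
  have ha : 0 < a := hb.trans_lt hba
  have hq : Filter.Tendsto (fun n : ℕ => C * (b / a) ^ 2 ^ n) Filter.atTop (nhds 0) := by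
    have := (tendsto_pow_atTop_nhds_zero_of_lt_one (div_nonneg hb ha.le)
      ((div_lt_one ha).2 hba)).comp (tendsto_pow_atTop_atTop_of_one_lt (α := ℕ) one_lt_two)
    simpa using this.const_mul C
  obtain ⟨n, hn⟩ := (hq.eventually (gt_mem_nhds one_pos)).exists
  have h1 : 1 ≤ C * (b / a) ^ 2 ^ n := by
    rw [div_pow, mul_div_assoc', le_div_iff₀ (by positivity), one_mul]
    exact h n
  exact (not_lt.2 h1) hn

lemma abs_re_add_im_le (z : ℂ) : |z.re + z.im| ≤ √2 * ‖z‖ := by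
  rw [← Real.sqrt_sq (norm_nonneg z), ← Real.sqrt_mul zero_le_two]
  apply Real.abs_le_sqrt
  rw [Complex.sq_norm, Complex.normSq_apply]
  nlinarith [sq_nonneg (z.re - z.im)]

lemma sq_add_sq_add_abs_sub_mul_add (a b : ℝ) :
    a ^ 2 + b ^ 2 + |a - b| * (a + b) = 2 * max a b ^ 2 := by
  rcases le_total a b with h | h
  · rw [abs_of_nonpos (sub_nonpos.2 h), max_eq_right h]; ring
  · rw [abs_of_nonneg (sub_nonneg.2 h), max_eq_left h]; ring

section SemiInnerProduct

variable {A : H →L[ℂ] H}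

lemma innerA_add_left (x y z : H) : innerA A (x + y) z = innerA A x z + innerA A y z := by
  simp [innerA]

lemma innerA_sub_left (x y z : H) : innerA A (x - y) z = innerA A x z - innerA A y z := by
  simp [innerA]

lemma innerA_smul_left (c : ℂ) (x y : H) : innerA A (c • x) y = c * innerA A x y := by
  simp [innerA]

lemma innerA_smul_right (c : ℂ) (x y : H) : innerA A x (c • y) = conj c * innerA A x y := by
  simp [innerA, mul_comm]

lemma innerA_conj_symm (hA : IsSelfAdjoint A) (x y : H) : conj (innerA A x y) = innerA A y x := by
  rw [innerA, innerA, inner_conj_symm, ← adjoint_inner_left, ← star_eq_adjoint, hA.star_eq]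

end SemiInnerProduct

-- A relation rather than an operation: an `A`-adjoint need not exist, nor be unique.
def IsAAdjoint (A S S' : H →L[ℂ] H) : Prop := A * S' = star S * A

namespace IsAAdjoint

variable {A S S' S₁ S₁' S₂ S₂' : H →L[ℂ] H}

lemma symm (hA : IsSelfAdjoint A) (h : IsAAdjoint A S S') : IsAAdjoint A S' S := by
  have h' := congrArg star h
  simp only [star_mul, star_star, hA.star_eq] at h'
  exact h'.symm

lemma add (h₁ : IsAAdjoint A S₁ S₁') (h₂ : IsAAdjoint A S₂ S₂') :
    IsAAdjoint A (S₁ + S₂) (S₁' + S₂') := by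
  rw [IsAAdjoint, mul_add, h₁, h₂, star_add, add_mul]

lemma sub (h₁ : IsAAdjoint A S₁ S₁') (h₂ : IsAAdjoint A S₂ S₂') :
    IsAAdjoint A (S₁ - S₂) (S₁' - S₂') := by
  rw [IsAAdjoint, mul_sub, h₁, h₂, star_sub, sub_mul]

lemma smul (c : ℂ) (h : IsAAdjoint A S S') : IsAAdjoint A (c • S) (star c • S') := by
  rw [IsAAdjoint, mul_smul_comm, h, star_smul, smul_mul_assoc]

lemma mul (h₁ : IsAAdjoint A S₁ S₁') (h₂ : IsAAdjoint A S₂ S₂') :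
    IsAAdjoint A (S₁ * S₂) (S₂' * S₁') := by
  rw [IsAAdjoint, ← mul_assoc, h₂, mul_assoc, h₁, star_mul, mul_assoc]

lemma pow (h : IsAAdjoint A S S) (n : ℕ) : IsAAdjoint A (S ^ n) (S ^ n) := by
  induction n with
  | zero => simp [IsAAdjoint]
  | succ n ih =>
    have h' := ih.mul h
    rwa [← pow_succ, ← pow_succ'] at h'

lemma innerA_apply_left (h : IsAAdjoint A S S') (x y : H) :
    innerA A (S' x) y = innerA A x (S y) := by
  change ⟪y, (A * S') x⟫ = ⟪S y, A x⟫
  rw [h, star_eq_adjoint]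
  exact adjoint_inner_right S y (A x)

lemma innerA_apply_self (hA : IsSelfAdjoint A) (h : IsAAdjoint A S S') (x : H) :
    innerA A (S' x) x = conj (innerA A (S x) x) := by
  rw [h.innerA_apply_left, innerA_conj_symm hA]

end IsAAdjoint

section Seminorm

variable {A : H →L[ℂ] H}

lemma normA_nonneg (x : H) : 0 ≤ normA A x := Real.sqrt_nonneg _

lemma innerA_eq_inner_sqrt (hA : A.IsPositive) (x y : H) :
    innerA A x y = ⟪CFC.sqrt A y, CFC.sqrt A x⟫ := by
  have hA0 : 0 ≤ A := (nonneg_iff_isPositive A).2 hA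
  have hR : IsSelfAdjoint (CFC.sqrt A) := IsSelfAdjoint.of_nonneg (CFC.sqrt_nonneg A)
  conv_lhs => rw [innerA, ← CFC.sqrt_mul_sqrt_self A hA0]
  rw [mul_apply_eq_comp, ← adjoint_inner_left, ← star_eq_adjoint, hR.star_eq]

lemma normA_eq_norm_sqrt (hA : A.IsPositive) (x : H) : normA A x = ‖CFC.sqrt A x‖ := by
  rw [normA, innerA_eq_inner_sqrt hA, ← Real.sqrt_sq (norm_nonneg (CFC.sqrt A x))]
  exact congrArg Real.sqrt (inner_self_eq_norm_sq (𝕜 := ℂ) _)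

lemma innerA_self (hA : A.IsPositive) (x : H) : innerA A x x = ((normA A x ^ 2 : ℝ) : ℂ) := by
  rw [innerA_eq_inner_sqrt hA, normA_eq_norm_sqrt hA, inner_self_eq_norm_sq_to_K]
  norm_cast

lemma norm_innerA_le (hA : A.IsPositive) (x y : H) :
    ‖innerA A x y‖ ≤ normA A x * normA A y := by
  rw [innerA_eq_inner_sqrt hA, normA_eq_norm_sqrt hA, normA_eq_norm_sqrt hA, mul_comm]
  exact norm_inner_le_norm _ _

lemma normA_add_le (hA : A.IsPositive) (x y : H) : normA A (x + y) ≤ normA A x + normA A y := by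
  simp only [normA_eq_norm_sqrt hA, map_add]
  exact norm_add_le _ _

lemma normA_sub_le (hA : A.IsPositive) (x y : H) : normA A (x - y) ≤ normA A x + normA A y := by
  simp only [normA_eq_norm_sqrt hA, map_sub]
  exact norm_sub_le _ _

lemma normA_smul (hA : A.IsPositive) (c : ℂ) (x : H) : normA A (c • x) = ‖c‖ * normA A x := by
  simp only [normA_eq_norm_sqrt hA, map_smul, norm_smul]

lemma normA_add_sq_add_normA_sub_sq (hA : A.IsPositive) (x y : H) :
    normA A (x + y) ^ 2 + normA A (x - y) ^ 2 = 2 * (normA A x ^ 2 + normA A y ^ 2) := by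
  simp only [normA_eq_norm_sqrt hA, map_add, map_sub]
  exact parallelogram_law_with_norm ℂ (CFC.sqrt A x) (CFC.sqrt A y)

lemma normA_le (hA : A.IsPositive) (x : H) : normA A x ≤ ‖CFC.sqrt A‖ * ‖x‖ := by
  rw [normA_eq_norm_sqrt hA]
  exact le_opNorm _ _

lemma exists_normA_eq_one_smul (hA : A.IsPositive) {x : H} (hx : normA A x ≠ 0) :
    ∃ y, normA A y = 1 ∧ x = (normA A x : ℂ) • y := by
  refine ⟨((normA A x)⁻¹ : ℂ) • x, ?_, ?_⟩
  · rw [normA_smul hA, norm_inv, Complex.norm_real, Real.norm_of_nonneg (normA_nonneg x),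
      inv_mul_cancel₀ hx]
  · rw [smul_smul, mul_inv_cancel₀ (by exact_mod_cast hx), one_smul]

lemma innerA_mul_apply_self (hA : A.IsPositive) {S S' : H →L[ℂ] H} (hS : IsAAdjoint A S S')
    (x : H) : innerA A ((S' * S) x) x = ((normA A (S x) ^ 2 : ℝ) : ℂ) := by
  rw [mul_apply_eq_comp, hS.innerA_apply_left, innerA_self hA]

lemma normA_apply_sq_le (hA : A.IsPositive) {S S' : H →L[ℂ] H} (hS : IsAAdjoint A S S') (x : H) :
    normA A (S x) ^ 2 ≤ normA A ((S' * S) x) * normA A x := by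
  have h := congrArg Complex.re (innerA_mul_apply_self hA hS x)
  rw [Complex.ofReal_re] at h
  rw [← h]
  exact (Complex.re_le_norm _).trans (norm_innerA_le hA _ _)

lemma normA_apply_pow_two_pow_le (hA : A.IsPositive) {B : H →L[ℂ] H} (hB : IsAAdjoint A B B)
    {x : H} (hx : normA A x ≤ 1) (n : ℕ) : normA A (B x) ^ 2 ^ n ≤ normA A ((B ^ 2 ^ n) x) := by
  induction n with
  | zero => simp
  | succ n ih =>
    calc normA A (B x) ^ 2 ^ (n + 1) = (normA A (B x) ^ 2 ^ n) ^ 2 := by rw [pow_succ, pow_mul]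
      _ ≤ normA A ((B ^ 2 ^ n) x) ^ 2 := by gcongr; exact pow_nonneg (normA_nonneg _) _
      _ ≤ normA A ((B ^ 2 ^ n * B ^ 2 ^ n) x) * normA A x := normA_apply_sq_le hA (hB.pow _) x
      _ ≤ normA A ((B ^ 2 ^ (n + 1)) x) := by
        rw [← pow_add, ← two_mul, ← pow_succ']
        exact mul_le_of_le_one_right (normA_nonneg _) hx

lemma normA_apply_le_norm (hA : A.IsPositive) {B : H →L[ℂ] H} (hB : IsAAdjoint A B B)
    {x : H} (hx : normA A x ≤ 1) : normA A (B x) ≤ ‖B‖ := by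
  refine le_of_forall_pow_two_pow_le_mul (C := ‖CFC.sqrt A‖ * ‖x‖) (norm_nonneg B) fun n => ?_
  calc normA A (B x) ^ 2 ^ n ≤ normA A ((B ^ 2 ^ n) x) := normA_apply_pow_two_pow_le hA hB hx n
    _ ≤ ‖CFC.sqrt A‖ * (‖B ^ 2 ^ n‖ * ‖x‖) := (normA_le hA _).trans (by gcongr; exact le_opNorm _ _)
    _ ≤ ‖CFC.sqrt A‖ * (‖B‖ ^ 2 ^ n * ‖x‖) := by gcongr; exact norm_pow_le' B (by positivity)
    _ = ‖CFC.sqrt A‖ * ‖x‖ * ‖B‖ ^ 2 ^ n := by ring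

lemma normA_apply_le_sqrt_norm (hA : A.IsPositive) {S S' : H →L[ℂ] H} (hS : IsAAdjoint A S S')
    {x : H} (hx : normA A x = 1) : normA A (S x) ≤ √‖S' * S‖ := by
  refine Real.le_sqrt_of_sq_le ((normA_apply_sq_le hA hS x).trans ?_)
  rw [hx, mul_one]
  exact normA_apply_le_norm hA ((hS.symm hA.isSelfAdjoint).mul hS) hx.le

end Seminorm

section OperatorSeminorm

variable {A S S' S₁ S₁' S₂ S₂' : H →L[ℂ] H}

lemma opNormA_nonneg : 0 ≤ opNormA A S :=
  Real.sSup_nonneg (by rintro _ ⟨x, -, rfl⟩; exact normA_nonneg _)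

lemma opNormA_le {c : ℝ} (hc : 0 ≤ c) (h : ∀ x, normA A x = 1 → normA A (S x) ≤ c) :
    opNormA A S ≤ c :=
  Real.sSup_le (by rintro _ ⟨x, hx, rfl⟩; exact h x hx) hc

lemma normA_apply_le_opNormA (hA : A.IsPositive) (hS : IsAAdjoint A S S') {x : H}
    (hx : normA A x = 1) : normA A (S x) ≤ opNormA A S :=
  le_csSup ⟨√‖S' * S‖, by rintro _ ⟨y, hy, rfl⟩; exact normA_apply_le_sqrt_norm hA hS hy⟩
    ⟨x, hx, rfl⟩

lemma wA_nonneg : 0 ≤ wA A S :=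
  Real.sSup_nonneg (by rintro _ ⟨x, -, rfl⟩; exact norm_nonneg _)

lemma wA_le {c : ℝ} (hc : 0 ≤ c) (h : ∀ x, normA A x = 1 → ‖innerA A (S x) x‖ ≤ c) :
    wA A S ≤ c :=
  Real.sSup_le (by rintro _ ⟨x, hx, rfl⟩; exact h x hx) hc

lemma norm_innerA_apply_le_normA (hA : A.IsPositive) {x : H} (hx : normA A x = 1) :
    ‖innerA A (S x) x‖ ≤ normA A (S x) := by
  simpa [hx] using norm_innerA_le hA (S x) x

lemma norm_innerA_apply_le_wA (hA : A.IsPositive) (hS : IsAAdjoint A S S') {x : H}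
    (hx : normA A x = 1) : ‖innerA A (S x) x‖ ≤ wA A S :=
  le_csSup ⟨√‖S' * S‖, by
    rintro _ ⟨y, hy, rfl⟩
    exact (norm_innerA_apply_le_normA hA hy).trans (normA_apply_le_sqrt_norm hA hS hy)⟩
    ⟨x, hx, rfl⟩

lemma opNormA_add_le (hA : A.IsPositive) (h₁ : IsAAdjoint A S₁ S₁') (h₂ : IsAAdjoint A S₂ S₂') :
    opNormA A (S₁ + S₂) ≤ opNormA A S₁ + opNormA A S₂ :=
  opNormA_le (add_nonneg opNormA_nonneg opNormA_nonneg) fun _ hx =>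
    (normA_add_le hA _ _).trans
      (add_le_add (normA_apply_le_opNormA hA h₁ hx) (normA_apply_le_opNormA hA h₂ hx))

lemma opNormA_sub_le (hA : A.IsPositive) (h₁ : IsAAdjoint A S₁ S₁') (h₂ : IsAAdjoint A S₂ S₂') :
    opNormA A (S₁ - S₂) ≤ opNormA A S₁ + opNormA A S₂ :=
  opNormA_le (add_nonneg opNormA_nonneg opNormA_nonneg) fun _ hx =>
    (normA_sub_le hA _ _).trans
      (add_le_add (normA_apply_le_opNormA hA h₁ hx) (normA_apply_le_opNormA hA h₂ hx))

lemma opNormA_smul_le (hA : A.IsPositive) (hS : IsAAdjoint A S S') (c : ℂ) :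
    opNormA A (c • S) ≤ ‖c‖ * opNormA A S :=
  opNormA_le (mul_nonneg (norm_nonneg c) opNormA_nonneg) fun _ hx => by
    rw [smul_apply, normA_smul hA]
    exact mul_le_mul_of_nonneg_left (normA_apply_le_opNormA hA hS hx) (norm_nonneg c)

lemma max_opNormA_le (hA : A.IsPositive) (h₁ : IsAAdjoint A S₁ S₁') (h₂ : IsAAdjoint A S₂ S₂') :
    max (opNormA A S₁) (opNormA A S₂) ≤ (opNormA A (S₁ + S₂) + opNormA A (S₁ - S₂)) / 2 := by
  have hadd := h₁.add h₂
  have hsub := h₁.sub h₂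
  have hhalf : ‖(2 : ℂ)⁻¹‖ = 1 / 2 := by norm_num
  refine max_le ?_ ?_
  · calc opNormA A S₁ = opNormA A ((2 : ℂ)⁻¹ • ((S₁ + S₂) + (S₁ - S₂))) := by congr 1; module
      _ ≤ ‖(2 : ℂ)⁻¹‖ * opNormA A ((S₁ + S₂) + (S₁ - S₂)) := opNormA_smul_le hA (hadd.add hsub) _
      _ ≤ 1 / 2 * (opNormA A (S₁ + S₂) + opNormA A (S₁ - S₂)) := by
        rw [hhalf]; gcongr; exact opNormA_add_le hA hadd hsub
      _ = _ := by ring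
  · calc opNormA A S₂ = opNormA A ((2 : ℂ)⁻¹ • ((S₁ + S₂) - (S₁ - S₂))) := by congr 1; module
      _ ≤ ‖(2 : ℂ)⁻¹‖ * opNormA A ((S₁ + S₂) - (S₁ - S₂)) := opNormA_smul_le hA (hadd.sub hsub) _
      _ ≤ 1 / 2 * (opNormA A (S₁ + S₂) + opNormA A (S₁ - S₂)) := by
        rw [hhalf]; gcongr; exact opNormA_sub_le hA hadd hsub
      _ = _ := by ring

lemma norm_innerA_apply_self_le (hA : A.IsPositive) {w : ℝ}
    (h : ∀ u, normA A u = 1 → ‖innerA A (S u) u‖ ≤ w) (x : H) :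
    ‖innerA A (S x) x‖ ≤ w * normA A x ^ 2 := by
  by_cases hx : normA A x = 0
  · simpa [hx] using norm_innerA_le hA (S x) x
  obtain ⟨u, hu, hxu⟩ := exists_normA_eq_one_smul hA hx
  set t := normA A x
  rw [hxu, map_smul, innerA_smul_left, innerA_smul_right, norm_mul, norm_mul, Complex.norm_conj,
    Complex.norm_real, Real.norm_of_nonneg (normA_nonneg x)]
  nlinarith [mul_le_mul_of_nonneg_left (h u hu) (mul_self_nonneg t)]

lemma opNormA_le_wA (hA : A.IsPositive) (hS : IsAAdjoint A S S) : opNormA A S ≤ wA A S := by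
  refine opNormA_le wA_nonneg fun x hx => ?_
  set w := wA A S
  have hw := norm_innerA_apply_self_le hA fun u hu => norm_innerA_apply_le_wA hA hS hu
  by_cases hSx : normA A (S x) = 0
  · rw [hSx]; exact wA_nonneg
  -- Polarize with `y = Sx / ‖Sx‖_A`, for which `⟨Sx, y⟩_A = ⟨Sy, x⟩_A = ‖Sx‖_A`.
  obtain ⟨y, hy, hxy⟩ := exists_normA_eq_one_smul hA hSx
  set t := normA A (S x)
  have hSxy : innerA A (S x) y = t := by
    rw [hxy, innerA_smul_left, innerA_self hA, hy]; simp
  have hSyx : innerA A (S y) x = t := by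
    rw [hS.innerA_apply_left, hxy, innerA_smul_right, innerA_self hA, hy]; simp
  have hpolar : innerA A (S (x + y)) (x + y) - innerA A (S (x - y)) (x - y) = (4 * t : ℝ) :=
    calc _ = 2 * (innerA A (S x) y + innerA A (S y) x) := by
          simp only [innerA, map_add, map_sub, inner_add_left, inner_add_right, inner_sub_left,
            inner_sub_right]
          ring
      _ = (4 * t : ℝ) := by rw [hSxy, hSyx]; push_cast; ring
  have h4t := congrArg Complex.re hpolar
  rw [Complex.sub_re, Complex.ofReal_re] at h4t
  have hsum : w * normA A (x + y) ^ 2 + w * normA A (x - y) ^ 2 = 4 * w := by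
    rw [← mul_add, normA_add_sq_add_normA_sub_sq hA, hx, hy]; ring
  have hplus := (Complex.re_le_norm _).trans (hw (x + y))
  have hminus := (neg_le_abs _).trans ((Complex.abs_re_le_norm _).trans (hw (x - y)))
  linarith

lemma opNormA_mul_self_add_mul_self_le (hA : A.IsPositive) (h₁ : IsAAdjoint A S₁ S₁)
    (h₂ : IsAAdjoint A S₂ S₂) :
    opNormA A (S₁ * S₁ + S₂ * S₂) ≤ opNormA A S₁ ^ 2 + opNormA A S₂ ^ 2 := by
  refine (opNormA_le_wA hA ((h₁.mul h₁).add (h₂.mul h₂))).trans (wA_le (by positivity) ?_)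
  intro x hx
  rw [add_apply, innerA_add_left, innerA_mul_apply_self hA h₁, innerA_mul_apply_self hA h₂,
    ← Complex.ofReal_add, Complex.norm_real, Real.norm_of_nonneg (by positivity)]
  have := normA_nonneg (A := A) (S₁ x)
  have := normA_nonneg (A := A) (S₂ x)
  gcongr
  exacts [normA_apply_le_opNormA hA h₁ hx, normA_apply_le_opNormA hA h₂ hx]

end OperatorSeminorm

section RealImaginaryParts

variable {A T Ts : H →L[ℂ] H}

lemma isAAdjoint_ReA (hA : IsSelfAdjoint A) (hT : IsAAdjoint A T Ts) :
    IsAAdjoint A (ReA T Ts) (ReA T Ts) := by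
  have h := (hT.add (hT.symm hA)).smul (2⁻¹ : ℂ)
  rwa [add_comm Ts T, star_inv₀, star_ofNat] at h

lemma isAAdjoint_ImA (hA : IsSelfAdjoint A) (hT : IsAAdjoint A T Ts) :
    IsAAdjoint A (ImA T Ts) (ImA T Ts) := by
  have h := (hT.sub (hT.symm hA)).smul (2 * Complex.I)⁻¹
  rwa [star_inv₀, star_mul', star_ofNat, Complex.star_def, Complex.conj_I, mul_neg, inv_neg,
    neg_smul, ← smul_neg, neg_sub] at h

lemma innerA_ReA_apply_self (hA : IsSelfAdjoint A) (hT : IsAAdjoint A T Ts) (x : H) :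
    innerA A (ReA T Ts x) x = (innerA A (T x) x).re := by
  rw [ReA, smul_apply, add_apply, innerA_smul_left, innerA_add_left, hT.innerA_apply_self hA,
    Complex.add_conj]
  push_cast
  ring

lemma innerA_ImA_apply_self (hA : IsSelfAdjoint A) (hT : IsAAdjoint A T Ts) (x : H) :
    innerA A (ImA T Ts x) x = (innerA A (T x) x).im := by
  rw [ImA, smul_apply, sub_apply, innerA_smul_left, innerA_sub_left, hT.innerA_apply_self hA,
    Complex.sub_conj]
  field_simp
  push_cast
  ring

lemma ReA_mul_self_add_ImA_mul_self (T Ts : H →L[ℂ] H) :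
    ReA T Ts * ReA T Ts + ImA T Ts * ImA T Ts = (2 : ℂ)⁻¹ • (T * Ts + Ts * T) := by
  have hI : ((2 : ℂ) * Complex.I)⁻¹ * (2 * Complex.I)⁻¹ = -(2⁻¹ * 2⁻¹) := by
    rw [← mul_inv, mul_mul_mul_comm, Complex.I_mul_I]
    norm_num
  have hexpand : (T + Ts) * (T + Ts) - (T - Ts) * (T - Ts) = (2 : ℂ) • (T * Ts + Ts * T) := by
    rw [two_smul]
    noncomm_ring
  simp only [ReA, ImA, smul_mul_smul_comm]
  rw [hI, neg_smul, ← sub_eq_add_neg, ← smul_sub, hexpand, smul_smul]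
  norm_num

lemma ReA_add_ImA_mul_self_add_ReA_sub_ImA_mul_self (T Ts : H →L[ℂ] H) :
    (ReA T Ts + ImA T Ts) * (ReA T Ts + ImA T Ts) + (ReA T Ts - ImA T Ts) * (ReA T Ts - ImA T Ts)
      = Ts * T + T * Ts := by
  have hparallelogram : ∀ P Q : H →L[ℂ] H,
      (P + Q) * (P + Q) + (P - Q) * (P - Q) = (2 : ℂ) • (P * P + Q * Q) := by
    intro P Q
    rw [two_smul]
    noncomm_ring
  rw [hparallelogram, ReA_mul_self_add_ImA_mul_self, smul_smul, add_comm (T * Ts)]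
  norm_num

lemma normA_ReA_apply_sq_add_normA_ImA_apply_sq (hA : A.IsPositive) (hT : IsAAdjoint A T Ts)
    (x : H) : normA A (ReA T Ts x) ^ 2 + normA A (ImA T Ts x) ^ 2
      = 1 / 2 * (innerA A ((T * Ts + Ts * T) x) x).re := by
  have h := congrArg Complex.re
    (innerA_add_left (A := A) ((ReA T Ts * ReA T Ts) x) ((ImA T Ts * ImA T Ts) x) x)
  rw [← add_apply, ReA_mul_self_add_ImA_mul_self, smul_apply, innerA_smul_left,
    innerA_mul_apply_self hA (isAAdjoint_ReA hA.isSelfAdjoint hT),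
    innerA_mul_apply_self hA (isAAdjoint_ImA hA.isSelfAdjoint hT), ← Complex.ofReal_add,
    Complex.ofReal_re] at h
  rw [← h]
  norm_num

end RealImaginaryParts

section NumericalRadius

variable {A T Ts : H →L[ℂ] H}

theorem wA_sq_le (hA : A.IsPositive) (hT : IsAAdjoint A T Ts) :
    wA A T ^ 2 ≤ 1 / 2 * opNormA A (T * Ts + Ts * T) := by
  have hS : IsAAdjoint A (T * Ts + Ts * T) (T * Ts + Ts * T) :=
    (hT.mul (hT.symm hA.isSelfAdjoint)).add ((hT.symm hA.isSelfAdjoint).mul hT)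
  have hpoint : ∀ x, normA A x = 1 →
      ‖innerA A (T x) x‖ ^ 2 ≤ 1 / 2 * opNormA A (T * Ts + Ts * T) := by
    intro x hx
    set z := innerA A (T x) x
    have hre : |z.re| ≤ normA A (ReA T Ts x) := by
      simpa [innerA_ReA_apply_self hA.isSelfAdjoint hT] using
        norm_innerA_apply_le_normA (S := ReA T Ts) hA hx
    have him : |z.im| ≤ normA A (ImA T Ts x) := by
      simpa [innerA_ImA_apply_self hA.isSelfAdjoint hT] using
        norm_innerA_apply_le_normA (S := ImA T Ts) hA hx
    calc ‖z‖ ^ 2 = |z.re| ^ 2 + |z.im| ^ 2 := by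
          rw [sq_abs, sq_abs, Complex.sq_norm, Complex.normSq_apply]; ring
      _ ≤ normA A (ReA T Ts x) ^ 2 + normA A (ImA T Ts x) ^ 2 := by gcongr
      _ = 1 / 2 * (innerA A ((T * Ts + Ts * T) x) x).re :=
          normA_ReA_apply_sq_add_normA_ImA_apply_sq hA hT x
      _ ≤ 1 / 2 * opNormA A (T * Ts + Ts * T) := by
          gcongr
          exact (Complex.re_le_norm _).trans
            ((norm_innerA_apply_le_normA hA hx).trans (normA_apply_le_opNormA hA hS hx))
  have hw : wA A T ≤ √(1 / 2 * opNormA A (T * Ts + Ts * T)) :=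
    wA_le (Real.sqrt_nonneg _) fun x hx => Real.le_sqrt_of_sq_le (hpoint x hx)
  calc wA A T ^ 2 ≤ √(1 / 2 * opNormA A (T * Ts + Ts * T)) ^ 2 := by
        gcongr
        exact wA_nonneg
    _ = 1 / 2 * opNormA A (T * Ts + Ts * T) :=
        Real.sq_sqrt (mul_nonneg (by norm_num) opNormA_nonneg)

theorem wA_ReA_add_ImA_le (hA : A.IsPositive) (hT : IsAAdjoint A T Ts) :
    wA A (ReA T Ts + ImA T Ts) ≤ √2 * wA A T :=
  wA_le (mul_nonneg (Real.sqrt_nonneg 2) wA_nonneg) fun x hx => by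
    rw [add_apply, innerA_add_left, innerA_ReA_apply_self hA.isSelfAdjoint hT,
      innerA_ImA_apply_self hA.isSelfAdjoint hT, ← Complex.ofReal_add, Complex.norm_real,
      Real.norm_eq_abs]
    exact (abs_re_add_im_le _).trans
      (mul_le_mul_of_nonneg_left (norm_innerA_apply_le_wA hA hT hx) (Real.sqrt_nonneg 2))

theorem wA_ReA_sub_ImA_le (hA : A.IsPositive) (hT : IsAAdjoint A T Ts) :
    wA A (ReA T Ts - ImA T Ts) ≤ √2 * wA A T :=
  wA_le (mul_nonneg (Real.sqrt_nonneg 2) wA_nonneg) fun x hx => by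
    rw [sub_apply, innerA_sub_left, innerA_ReA_apply_self hA.isSelfAdjoint hT,
      innerA_ImA_apply_self hA.isSelfAdjoint hT, ← Complex.ofReal_sub, Complex.norm_real,
      Real.norm_eq_abs]
    have h := abs_re_add_im_le (conj (innerA A (T x) x))
    rw [Complex.conj_re, Complex.conj_im, Complex.norm_conj, ← sub_eq_add_neg] at h
    exact h.trans
      (mul_le_mul_of_nonneg_left (norm_innerA_apply_le_wA hA hT hx) (Real.sqrt_nonneg 2))

theorem le_wA_sq (hA : A.IsPositive) (hT : IsAAdjoint A T Ts) :
    (1/4) * opNormA A (Ts * T + T * Ts)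
        + (|opNormA A (ReA T Ts + ImA T Ts) - opNormA A (ReA T Ts - ImA T Ts)| / 2)
          * max (opNormA A (ReA T Ts)) (opNormA A (ImA T Ts)) ≤ wA A T ^ 2 := by
  set P := ReA T Ts
  set Q := ImA T Ts
  set a := opNormA A (P + Q)
  set b := opNormA A (P - Q)
  have hP : IsAAdjoint A P P := isAAdjoint_ReA hA.isSelfAdjoint hT
  have hQ : IsAAdjoint A Q Q := isAAdjoint_ImA hA.isSelfAdjoint hT
  have hsum : opNormA A (Ts * T + T * Ts) ≤ a ^ 2 + b ^ 2 := by
    rw [← ReA_add_ImA_mul_self_add_ReA_sub_ImA_mul_self]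
    exact opNormA_mul_self_add_mul_self_le hA (hP.add hQ) (hP.sub hQ)
  have hmax : max a b ^ 2 ≤ 2 * wA A T ^ 2 := by
    have hab : max a b ≤ √2 * wA A T :=
      max_le ((opNormA_le_wA hA (hP.add hQ)).trans (wA_ReA_add_ImA_le hA hT))
        ((opNormA_le_wA hA (hP.sub hQ)).trans (wA_ReA_sub_ImA_le hA hT))
    calc max a b ^ 2 ≤ (√2 * wA A T) ^ 2 :=
          pow_le_pow_left₀ (le_max_of_le_left opNormA_nonneg) hab 2
      _ = 2 * wA A T ^ 2 := by rw [mul_pow, Real.sq_sqrt zero_le_two]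
  calc (1/4) * opNormA A (Ts * T + T * Ts) + (|a - b| / 2) * max (opNormA A P) (opNormA A Q)
      ≤ (1/4) * (a ^ 2 + b ^ 2) + (|a - b| / 2) * ((a + b) / 2) := by
        gcongr
        exact max_opNormA_le hA hP hQ
    _ = max a b ^ 2 / 2 := by linear_combination (1/4) * sq_add_sq_add_abs_sub_mul_add a b
    _ ≤ wA A T ^ 2 := by linarith

end NumericalRadius

theorem stmt3_general (A : H →L[ℂ] H) (hA : A.IsPositive)
    (T Ts : H →L[ℂ] H)
    (hT : A.comp Ts = (ContinuousLinearMap.adjoint T).comp A)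
    (α : ℝ)
    (hα : α = |opNormA A (ReA T Ts + ImA T Ts) - opNormA A (ReA T Ts - ImA T Ts)|) :
    (1/4) * opNormA A (Ts * T + T * Ts)
        + (α/2) * max (opNormA A (ReA T Ts)) (opNormA A (ImA T Ts)) ≤ (wA A T)^2
      ∧ (wA A T)^2 ≤ (1/2) * opNormA A (T * Ts + Ts * T) := by
  have hT' : IsAAdjoint A T Ts := hT
  subst hα
  exact ⟨le_wA_sq hA hT', wA_sq_le hA hT'⟩

theorem stmt3 (A : H →L[ℂ] H) (hA : A.IsPositive) (hA0 : A ≠ 0)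
    (T Ts : H →L[ℂ] H)
    (hT : A.comp Ts = (ContinuousLinearMap.adjoint T).comp A)
    (α : ℝ)
    (hα : α = |opNormA A (ReA T Ts + ImA T Ts) - opNormA A (ReA T Ts - ImA T Ts)|) :
    (1/4) * opNormA A (Ts * T + T * Ts)
        + (α/2) * max (opNormA A (ReA T Ts)) (opNormA A (ImA T Ts)) ≤ (wA A T)^2
      ∧ (wA A T)^2 ≤ (1/2) * opNormA A (T * Ts + Ts * T) :=
  stmt3_general A hA T Ts hT α hα
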